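/- arXiv:1608.02741 — 6 statements merged into one kernel-verified Lean document; each statement's English description precedes it below -/
import Mathlib

section
/- Let A be an n×n Metzler matrix. If there exists a vector λ ∈ ℝ^n with all entries strictly positive such that every entry of the row vector λᵀA is strictly negative, then A is Hurwitz stable, i.e., every eigenvalue of A has strictly negative real part. -/
/-!
Take an eigenvector `v` of `A` for the eigenvalue `μ` and set `x = (‖v i‖)ᵢ`, a nonzero
nonnegative vector. Because the off-diagonal entries of `A` are nonnegative, the
triangle inequality applied to the eigenvalue equation gives `re μ • x ≤ A *ᵥ x`.
Pairing with the positive vector `l` yields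
`re μ * (l ⬝ᵥ x) ≤ (lᵀA) ⬝ᵥ x < 0 < l ⬝ᵥ x`, hence `re μ < 0`.
-/

open Matrix

namespace Matrix

variable {ι : Type*} [Fintype ι] [DecidableEq ι]

theorem exists_mulVec_eq_smul_of_mem_spectrum {K : Type*} [Field K] {M : Matrix ι ι K} {μ : K}
    (hμ : μ ∈ spectrum K M) : ∃ v ≠ 0, M *ᵥ v = μ • v := by
  rw [← spectrum_toLin', ← Module.End.hasEigenvalue_iff_mem_spectrum] at hμ
  obtain ⟨v, hv⟩ := hμ.exists_hasEigenvector
  exact ⟨v, hv.2, by simpa using hv.apply_eq_smul⟩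

theorem re_smul_norm_le_mulVec_norm {A : Matrix ι ι ℝ} (hA : ∀ i j, i ≠ j → 0 ≤ A i j)
    {μ : ℂ} {v : ι → ℂ} (hv : A.map (algebraMap ℝ ℂ) *ᵥ v = μ • v) :
    μ.re • (‖v ·‖) ≤ A *ᵥ (‖v ·‖) := by
  intro i
  have heig : (μ - A i i) * v i = ∑ j ∈ Finset.univ.erase i, (A i j : ℂ) * v j := by
    have := congrFun hv i
    simp only [mulVec, dotProduct, map_apply, Pi.smul_apply, smul_eq_mul,
      Complex.coe_algebraMap] at this
    rw [Finset.sum_erase_eq_sub (Finset.mem_univ i), this]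
    ring
  have hoff : (μ.re - A i i) * ‖v i‖ ≤ ∑ j ∈ Finset.univ.erase i, A i j * ‖v j‖ :=
    calc (μ.re - A i i) * ‖v i‖ = (μ - A i i).re * ‖v i‖ := by simp
      _ ≤ ‖(μ - A i i) * v i‖ := by
        rw [norm_mul]; gcongr; exact Complex.re_le_norm _
      _ ≤ ∑ j ∈ Finset.univ.erase i, ‖(A i j : ℂ) * v j‖ := heig ▸ norm_sum_le _ _
      _ = ∑ j ∈ Finset.univ.erase i, A i j * ‖v j‖ := by
        refine Finset.sum_congr rfl fun j hj => ?_
        rw [norm_mul, Complex.norm_real,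
          Real.norm_of_nonneg (hA i j (Finset.ne_of_mem_erase hj).symm)]
  simp only [Pi.smul_apply, smul_eq_mul, mulVec, dotProduct]
  rw [← Finset.add_sum_erase _ _ (Finset.mem_univ i)]
  linarith

end Matrix

theorem dotProduct_pos_of_pos_of_nonneg {ι R : Type*} [Fintype ι] [Semiring R] [PartialOrder R]
    [IsStrictOrderedRing R] {u x : ι → R} (hu : ∀ i, 0 < u i) (hx : 0 ≤ x) (hx0 : x ≠ 0) :
    0 < u ⬝ᵥ x := by
  obtain ⟨i, hi⟩ := Function.ne_iff.mp hx0
  exact Finset.sum_pos' (fun j _ => mul_nonneg (hu j).le (hx j))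
    ⟨i, Finset.mem_univ i, mul_pos (hu i) ((hx i).lt_of_ne' hi)⟩

/-- A Metzler matrix admitting a strictly positive vector `l` with `lᵀA < 0` componentwise
is Hurwitz stable. -/
theorem metzler_copositive_hurwitz (n : ℕ) (A : Matrix (Fin n) (Fin n) ℝ)
    (hA : ∀ i j, i ≠ j → 0 ≤ A i j)
    (h : ∃ l : Fin n → ℝ, (∀ i, 0 < l i) ∧ ∀ j, Matrix.vecMul l A j < 0) :
    ∀ μ ∈ spectrum ℂ (A.map (algebraMap ℝ ℂ)), μ.re < 0 := by
  intro μ hμ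
  obtain ⟨l, hl, hlA⟩ := h
  obtain ⟨v, hv0, hv⟩ := exists_mulVec_eq_smul_of_mem_spectrum hμ
  set x : Fin n → ℝ := (‖v ·‖)
  have hx : 0 ≤ x := fun i => norm_nonneg _
  have hx0 : x ≠ 0 := fun h => hv0 (funext fun i => norm_eq_zero.mp (congrFun h i))
  have hbound : μ.re * (l ⬝ᵥ x) ≤ (l ᵥ* A) ⬝ᵥ x := by
    rw [← dotProduct_mulVec, ← smul_eq_mul, ← dotProduct_smul]
    exact dotProduct_le_dotProduct_of_nonneg_left (re_smul_norm_le_mulVec_norm hA hv)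
      fun i => (hl i).le
  have hpos : 0 < l ⬝ᵥ x := dotProduct_pos_of_pos_of_nonneg hl hx hx0
  have hneg : 0 < -(l ᵥ* A) ⬝ᵥ x :=
    dotProduct_pos_of_pos_of_nonneg (fun j => neg_pos.mpr (hlA j)) hx hx0
  rw [neg_dotProduct] at hneg
  nlinarith
end

section
/- Let A be an n×n Metzler matrix. If A is Hurwitz stable then A is invertible and every entry of A⁻¹ is nonpositive. -/
/-!
For large `s > 0` the matrix `C = 1 + s⁻¹ • A` is entrywise nonnegative (as `A` is Metzler), and
every eigenvalue `1 + μ / s` of `C` lies in the open unit disc: `‖μ + s‖ < s` as soon as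
`s > ‖μ‖² / (-2 Re μ)`, which is where Hurwitz stability enters. By Gelfand's formula some power
`C ^ k` is a contraction, so `1 - C = -s⁻¹ • A` has a left inverse built from Neumann series of
nonnegative matrices; hence `A⁻¹ = -s⁻¹ • (1 - C)⁻¹` is entrywise nonpositive.
-/

open Matrix Filter
open scoped Pointwise

theorem Complex.eventually_norm_one_add_inv_mul_lt_one {μ : ℂ} (hμ : μ.re < 0) :
    ∀ᶠ s : ℝ in atTop, ‖1 + (s : ℂ)⁻¹ * μ‖ < 1 := by
  filter_upwards [eventually_gt_atTop 0, eventually_gt_atTop (‖μ‖ ^ 2 / (-2 * μ.re))]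
    with s hs hlarge
  have hsq : ‖μ + s‖ ^ 2 = ‖μ‖ ^ 2 + 2 * s * μ.re + s ^ 2 := by
    simp only [Complex.sq_norm, Complex.normSq_apply, Complex.add_re, Complex.add_im,
      Complex.ofReal_re, Complex.ofReal_im, add_zero]
    ring
  have hμs : ‖μ‖ ^ 2 < s * (-2 * μ.re) := (div_lt_iff₀ (by linarith)).mp hlarge
  have hlt : ‖μ + s‖ < s :=
    (pow_lt_pow_iff_left₀ (norm_nonneg _) hs.le two_ne_zero).mp (by nlinarith)
  have hs' : (s : ℂ) ≠ 0 := Complex.ofReal_ne_zero.mpr hs.ne'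
  have hdiv : 1 + (s : ℂ)⁻¹ * μ = (μ + s) / s := by
    field_simp
    ring
  rwa [hdiv, norm_div, Complex.norm_of_nonneg hs.le, div_lt_one hs]

theorem spectrum.one_add_smul_eq {𝕜 A : Type*} [Field 𝕜] [Ring A] [Algebra 𝕜 A] (a : A)
    {c : 𝕜} (hc : c ≠ 0) : spectrum 𝕜 (1 + c • a) = (1 : 𝕜) +ᵥ c • spectrum 𝕜 a := by
  rw [← map_one (algebraMap 𝕜 A), ← spectrum.vadd_eq]
  exact congrArg _ (spectrum.unit_smul_eq_smul a (Units.mk0 c hc))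

theorem spectrum.exists_nnnorm_pow_lt_one {A : Type*} [NormedRing A] [NormedAlgebra ℂ A]
    [CompleteSpace A] {a : A} (ha : ∀ z ∈ spectrum ℂ a, ‖z‖ < 1) : ∃ m, ‖a ^ m‖₊ < 1 := by
  have hρ : spectralRadius ℂ a < 1 := by
    cases subsingleton_or_nontrivial A
    · simp [spectralRadius, spectrum.of_subsingleton]
    · exact_mod_cast spectrum.spectralRadius_lt_of_forall_lt a fun z hz => by
        exact_mod_cast ha z hz
  obtain ⟨m, hlt, hm⟩ := ((pow_nnnorm_pow_one_div_tendsto_nhds_spectralRadius a).eventually_lt_const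
    hρ |>.and (eventually_gt_atTop 0)).exists
  refine ⟨m, ENNReal.coe_lt_one_iff.mp (lt_of_not_ge fun h => hlt.not_ge ?_)⟩
  exact ENNReal.one_le_rpow h (by positivity)

namespace Matrix

theorem mul_apply_nonneg {l m n α : Type*} [Fintype m] [Semiring α] [PartialOrder α]
    [IsOrderedRing α] {M : Matrix l m α} {N : Matrix m n α} (hM : ∀ i j, 0 ≤ M i j)
    (hN : ∀ i j, 0 ≤ N i j) (i : l) (j : n) : 0 ≤ (M * N) i j :=
  Finset.sum_nonneg fun k _ => mul_nonneg (hM i k) (hN k j)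

theorem one_add_inv_smul_apply_nonneg {m 𝕜 : Type*} [DecidableEq m] [Field 𝕜] [LinearOrder 𝕜]
    [IsStrictOrderedRing 𝕜] {A : Matrix m m 𝕜} (hA : ∀ i j, i ≠ j → 0 ≤ A i j) {s : 𝕜}
    (hs : 0 < s) (hdiag : ∀ i, -A i i ≤ s) (i j : m) : 0 ≤ (1 + s⁻¹ • A) i j := by
  rw [add_apply, smul_apply, smul_eq_mul]
  rcases eq_or_ne i j with rfl | hij
  · rw [one_apply_eq]
    calc 0 ≤ s⁻¹ * (s + A i i) := mul_nonneg (inv_nonneg.mpr hs.le) (by linarith [hdiag i])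
      _ = 1 + s⁻¹ * A i i := by field_simp
  · rw [one_apply_ne hij, zero_add]
    exact mul_nonneg (inv_nonneg.mpr hs.le) (hA i j hij)

section Frobenius

open scoped Norms.Frobenius

variable {m : Type*} [Fintype m] [DecidableEq m]

theorem tsum_pow_apply_nonneg {M : Matrix m m ℝ} (hM : ∀ i j, 0 ≤ M i j) (hnorm : ‖M‖ < 1)
    (i j : m) : 0 ≤ (∑' k, M ^ k) i j :=
  have hsum := (summable_geometric_of_norm_lt_one hnorm).hasSum
  (Pi.hasSum.mp (Pi.hasSum.mp hsum i) j).nonneg fun k => pow_apply_nonneg hM k i j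

theorem exists_nonneg_mul_one_sub_eq_one {C : Matrix m m ℝ} (hC : ∀ i j, 0 ≤ C i j)
    (hspec : ∀ z ∈ spectrum ℂ (C.map (algebraMap ℝ ℂ)), ‖z‖ < 1) :
    ∃ D : Matrix m m ℝ, (∀ i j, 0 ≤ D i j) ∧ D * (1 - C) = 1 := by
  obtain ⟨k, hk⟩ := spectrum.exists_nnnorm_pow_lt_one hspec
  have hCk : ‖C ^ k‖ < 1 := by
    rwa [← Matrix.map_pow, frobenius_nnnorm_map_eq _ _ (by simp), ← NNReal.coe_lt_coe,
      coe_nnnorm] at hk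
  have hgeom : ∀ i j, 0 ≤ (∑ l ∈ Finset.range k, C ^ l) i j := fun i j => by
    rw [sum_apply]
    exact Finset.sum_nonneg fun l _ => pow_apply_nonneg hC l i j
  refine ⟨(∑' l, (C ^ k) ^ l) * ∑ l ∈ Finset.range k, C ^ l,
    mul_apply_nonneg (tsum_pow_apply_nonneg (pow_apply_nonneg hC k) hCk) hgeom, ?_⟩
  rw [mul_assoc, geom_sum_mul_neg]
  exact geom_series_mul_neg _ hCk

end Frobenius

end Matrix

/-- A Hurwitz stable Metzler matrix is invertible with entrywise nonpositive inverse. -/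
theorem metzler_hurwitz_inv_nonpos (n : ℕ) (A : Matrix (Fin n) (Fin n) ℝ)
    (hA : ∀ i j, i ≠ j → 0 ≤ A i j)
    (hHur : ∀ μ ∈ spectrum ℂ (A.map (algebraMap ℝ ℂ)), μ.re < 0) :
    IsUnit A ∧ ∀ i j, A⁻¹ i j ≤ 0 := by
  obtain ⟨s, hs, hdiag, hshift⟩ : ∃ s : ℝ, 0 < s ∧ (∀ i, -A i i ≤ s) ∧
      ∀ μ ∈ spectrum ℂ (A.map (algebraMap ℝ ℂ)), ‖1 + (s : ℂ)⁻¹ * μ‖ < 1 :=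
    (eventually_gt_atTop 0 |>.and <| (eventually_all.mpr fun i => eventually_ge_atTop (-A i i)).and <|
      (finite_spectrum _).eventually_all.mpr fun μ hμ =>
        Complex.eventually_norm_one_add_inv_mul_lt_one (hHur μ hμ)).exists
  have hspec : ∀ z ∈ spectrum ℂ ((1 + s⁻¹ • A).map (algebraMap ℝ ℂ)), ‖z‖ < 1 := by
    have hmap : (1 + s⁻¹ • A).map (algebraMap ℝ ℂ) = 1 + (s : ℂ)⁻¹ • A.map (algebraMap ℝ ℂ) := by
      ext i j
      simp only [Complex.coe_algebraMap, map_apply, Matrix.add_apply, one_apply,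
        Matrix.smul_apply, smul_eq_mul, Complex.ofReal_add, Complex.ofReal_mul,
        Complex.ofReal_inv, add_left_inj]
      split_ifs <;> simp
    rw [hmap, spectrum.one_add_smul_eq _ (inv_ne_zero (Complex.ofReal_ne_zero.mpr hs.ne'))]
    rintro _ ⟨_, ⟨μ, hμ, rfl⟩, rfl⟩
    exact hshift μ hμ
  obtain ⟨D, hD, hDC⟩ :=
    exists_nonneg_mul_one_sub_eq_one (one_add_inv_smul_apply_nonneg hA hs hdiag) hspec
  have hleft : (-s⁻¹ • D) * A = 1 := by
    rw [← hDC, sub_add_cancel_left, mul_neg, mul_smul_comm, smul_mul_assoc, neg_smul]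
  refine ⟨(isUnit_iff_isUnit_det A).mpr (isUnit_det_of_left_inverse hleft), fun i j => ?_⟩
  rw [inv_eq_left_inv hleft, Matrix.smul_apply, smul_eq_mul]
  exact mul_nonpos_of_nonpos_of_nonneg (neg_nonpos.mpr (inv_nonneg.mpr hs.le)) (hD i j)
end

section
/- Let B be an n×n matrix with all entries nonnegative. If there exists a vector λ ∈ ℝ^n with all entries strictly positive such that every entry of λᵀ(B − I) is strictly negative, then the spectral radius of B is strictly less than 1. -/
/-!
If `B v = μ v` with `v ≠ 0`, the triangle inequality and `B ≥ 0` give `|μ| |v| ≤ B |v|`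
componentwise. Pairing with the positive vector `l` and using `lᵀ B < lᵀ` yields
`|μ| (l ⬝ |v|) ≤ (lᵀ B) ⬝ |v| < l ⬝ |v|`, and `l ⬝ |v| > 0`, so `|μ| < 1`.
-/

open Matrix

theorem Matrix.exists_mulVec_eq_smul_of_mem_spectrum_s4 {K ι : Type*} [Field K] [Fintype ι]
    [DecidableEq ι] {A : Matrix ι ι K} {μ : K} (hμ : μ ∈ spectrum K A) :
    ∃ v ≠ 0, A *ᵥ v = μ • v := by
  rw [← Matrix.spectrum_toLin', ← Module.End.hasEigenvalue_iff_mem_spectrum] at hμ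
  obtain ⟨v, hv, hv0⟩ := hμ.exists_hasEigenvector
  exact ⟨v, hv0, by simpa using Module.End.mem_eigenspace_iff.mp hv⟩

theorem Matrix.norm_smul_le_mulVec_norm {𝕜 ι : Type*} [RCLike 𝕜] [Fintype ι]
    {B : Matrix ι ι ℝ} (hB : ∀ i j, 0 ≤ B i j) {v : ι → 𝕜} {μ : 𝕜}
    (hv : B.map (algebraMap ℝ 𝕜) *ᵥ v = μ • v) (i : ι) :
    ‖μ‖ * ‖v i‖ ≤ (B *ᵥ fun j ↦ ‖v j‖) i :=
  calc ‖μ‖ * ‖v i‖ = ‖∑ j, algebraMap ℝ 𝕜 (B i j) * v j‖ := by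
        rw [← norm_mul, ← smul_eq_mul, ← Pi.smul_apply, ← hv]; rfl
    _ ≤ ∑ j, ‖algebraMap ℝ 𝕜 (B i j) * v j‖ := norm_sum_le _ _
    _ = (B *ᵥ fun j ↦ ‖v j‖) i := by
        simp only [norm_mul, norm_algebraMap', Real.norm_of_nonneg (hB i _)]; rfl

theorem Matrix.lt_one_of_smul_le_mulVec_of_vecMul_lt {ι : Type*} [Fintype ι]
    {B : Matrix ι ι ℝ} {l w : ι → ℝ} {c : ℝ} (hl : ∀ i, 0 < l i) (hlB : ∀ j, (l ᵥ* B) j < l j)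
    (hw : 0 ≤ w) (hw0 : w ≠ 0) (hc : ∀ i, c * w i ≤ (B *ᵥ w) i) : c < 1 := by
  obtain ⟨k, hk⟩ : ∃ k, w k ≠ 0 := Function.ne_iff.mp hw0
  have hwk : 0 < w k := (hw k).lt_of_ne' hk
  have hpos : 0 < l ⬝ᵥ w :=
    Finset.sum_pos' (fun i _ ↦ mul_nonneg (hl i).le (hw i)) ⟨k, by simp, mul_pos (hl k) hwk⟩
  have hstrict : (l ᵥ* B) ⬝ᵥ w < l ⬝ᵥ w :=
    Finset.sum_lt_sum (fun j _ ↦ mul_le_mul_of_nonneg_right (hlB j).le (hw j))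
      ⟨k, by simp, mul_lt_mul_of_pos_right (hlB k) hwk⟩
  refine (mul_lt_iff_lt_one_left hpos).mp ?_
  calc c * (l ⬝ᵥ w) = l ⬝ᵥ (c • w) := by rw [dotProduct_smul, smul_eq_mul]
    _ ≤ l ⬝ᵥ (B *ᵥ w) :=
        Finset.sum_le_sum fun i _ ↦ mul_le_mul_of_nonneg_left (hc i) (hl i).le
    _ = (l ᵥ* B) ⬝ᵥ w := dotProduct_mulVec l B w
    _ < l ⬝ᵥ w := hstrict

/-- For a nonnegative matrix `B`, if `lᵀ(B - I) < 0` componentwise for some strictly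
positive `l`, then the spectral radius of `B` is less than 1. -/
theorem nonneg_copositive_schur (n : ℕ) (B : Matrix (Fin n) (Fin n) ℝ)
    (hB : ∀ i j, 0 ≤ B i j)
    (h : ∃ l : Fin n → ℝ, (∀ i, 0 < l i) ∧ ∀ j, Matrix.vecMul l (B - 1) j < 0) :
    ∀ μ ∈ spectrum ℂ (B.map (algebraMap ℝ ℂ)), ‖μ‖ < 1 := by
  obtain ⟨l, hl, hlB⟩ := h
  intro μ hμ
  obtain ⟨v, hv0, hv⟩ := exists_mulVec_eq_smul_of_mem_spectrum_s4 hμ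
  have hlB' : ∀ j, (l ᵥ* B) j < l j := fun j ↦ by
    simpa only [vecMul_sub, vecMul_one, Pi.sub_apply, sub_neg] using hlB j
  refine lt_one_of_smul_le_mulVec_of_vecMul_lt hl hlB' (fun i ↦ norm_nonneg (v i)) ?_
    (norm_smul_le_mulVec_norm hB hv)
  exact fun h0 ↦ hv0 (funext fun i ↦ norm_eq_zero.mp (congrFun h0 i))
end

section
/- Let A be a Metzler matrix and J a nonnegative matrix, both n×n, and let T̄ > 0. Suppose there exists λ ∈ ℝ^n with all entries strictly positive such that λᵀA < 0 (componentwise) and λᵀ(J·exp(A·T̄)) < λᵀ (componentwise). Then for every θ ≥ T̄, λᵀ(J·exp(A·θ)) < λᵀ componentwise. -/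
/-!
Write `θ = T + s` with `s ≥ 0`. A Metzler matrix becomes nonnegative after adding `c • 1`, so
`exp (s • A) = e^{-cs} exp (s • (A + c • 1))` is entrywise nonnegative with positive diagonal.
Hence `lᵀ J exp (θ A) = (lᵀ J exp (T A)) exp (s A) < lᵀ exp (s A)`, and `lᵀ exp (s A) ≤ lᵀ` because
`t ↦ lᵀ exp (t A)` has derivative `(lᵀ A) exp (t A) ≤ 0`.
-/

open Matrix NormedSpace

namespace Matrix

variable {m : Type*}

def IsMetzler (A : Matrix m m ℝ) : Prop :=
  ∀ i j, i ≠ j → 0 ≤ A i j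

theorem IsMetzler.smul {A : Matrix m m ℝ} (hA : A.IsMetzler) {s : ℝ} (hs : 0 ≤ s) :
    (s • A).IsMetzler :=
  fun i j hij => mul_nonneg hs (hA i j hij)

section Fintype

variable [Fintype m]

theorem vecMul_apply_lt_vecMul_apply {E : Matrix m m ℝ} (hE : ∀ i j, 0 ≤ E i j) {j : m}
    (hEj : 0 < E j j) {v w : m → ℝ} (hvw : ∀ k, v k ≤ w k) (hvwj : v j < w j) :
    (v ᵥ* E) j < (w ᵥ* E) j :=
  Finset.sum_lt_sum (fun k _ => mul_le_mul_of_nonneg_right (hvw k) (hE k j))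
    ⟨j, Finset.mem_univ j, mul_lt_mul_of_pos_right hvwj hEj⟩

end Fintype

variable [Fintype m] [DecidableEq m]

open scoped Nat Matrix.Norms.Operator in
theorem hasSum_exp_apply (B : Matrix m m ℝ) (i j : m) :
    HasSum (fun k : ℕ => (k !⁻¹ : ℝ) * (B ^ k) i j) (exp B i j) :=
  Pi.hasSum.mp (Pi.hasSum.mp (exp_series_hasSum_exp' (𝕂 := ℝ) B) i) j

section Nonneg

variable {B : Matrix m m ℝ} (hB : ∀ i j, 0 ≤ B i j)
include hB

theorem exp_apply_nonneg_of_nonneg (i j : m) : 0 ≤ exp B i j :=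
  (hasSum_exp_apply B i j).nonneg fun k => mul_nonneg (by positivity) (pow_apply_nonneg hB k i j)

theorem one_le_exp_apply_self_of_nonneg (i : m) : 1 ≤ exp B i i := by
  simpa using le_hasSum (hasSum_exp_apply B i i) 0 fun k _ =>
    mul_nonneg (by positivity) (pow_apply_nonneg hB k i i)

end Nonneg

theorem exp_smul_one (c : ℝ) : exp (c • 1 : Matrix m m ℝ) = Real.exp c • 1 := by
  simp_rw [smul_one_eq_diagonal, exp_diagonal, Pi.exp_def, Real.exp_eq_exp_ℝ]

theorem exp_eq_exp_neg_smul_exp_add_smul_one (A : Matrix m m ℝ) (c : ℝ) :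
    exp A = Real.exp (-c) • exp (A + c • 1) := by
  have hc : Commute ((-c) • 1) (A + c • 1) := (Commute.one_left _).smul_left _
  rw [← smul_one_mul, ← exp_smul_one, ← exp_add_of_commute _ _ hc]
  congr 1; module

namespace IsMetzler

variable {A : Matrix m m ℝ} (hA : A.IsMetzler)
include hA

theorem add_smul_one_apply_nonneg (i j : m) : 0 ≤ (A + (∑ k, |A k k|) • 1) i j := by
  rcases eq_or_ne i j with rfl | hij
  · have : |A i i| ≤ ∑ k, |A k k| :=
      Finset.single_le_sum (fun k _ => abs_nonneg (A k k)) (Finset.mem_univ i)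
    simp only [add_apply, smul_apply, one_apply_eq, smul_eq_mul, mul_one]
    linarith [neg_abs_le (A i i)]
  · simpa [one_apply_ne hij] using hA i j hij

theorem exp_apply_nonneg (i j : m) : 0 ≤ exp A i j := by
  rw [exp_eq_exp_neg_smul_exp_add_smul_one A (∑ k, |A k k|), smul_apply, smul_eq_mul]
  exact mul_nonneg (Real.exp_nonneg _) (exp_apply_nonneg_of_nonneg hA.add_smul_one_apply_nonneg i j)

theorem exp_apply_self_pos (i : m) : 0 < exp A i i := by
  rw [exp_eq_exp_neg_smul_exp_add_smul_one A (∑ k, |A k k|), smul_apply, smul_eq_mul]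
  exact mul_pos (Real.exp_pos _)
    (one_pos.trans_le (one_le_exp_apply_self_of_nonneg hA.add_smul_one_apply_nonneg i))

end IsMetzler

open scoped Matrix.Norms.Operator in
theorem hasDerivAt_vecMul_exp_smul_apply (l : m → ℝ) (A : Matrix m m ℝ) (j : m) (t : ℝ) :
    HasDerivAt (fun t => (l ᵥ* exp (t • A)) j) ((l ᵥ* (A * exp (t • A))) j) t :=
  let L : Matrix m m ℝ →L[ℝ] ℝ :=
    (LinearMap.proj j ∘ₗ vecMulBilin ℝ ℝ l).toContinuousLinearMap
  L.hasFDerivAt.comp_hasDerivAt t (hasDerivAt_exp_smul_const' A t)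

theorem IsMetzler.vecMul_exp_smul_apply_le {A : Matrix m m ℝ} (hA : A.IsMetzler) {l : m → ℝ}
    (hlA : ∀ j, (l ᵥ* A) j ≤ 0) {s : ℝ} (hs : 0 ≤ s) (j : m) :
    (l ᵥ* exp (s • A)) j ≤ l j := by
  have hanti : AntitoneOn (fun t => (l ᵥ* exp (t • A)) j) (Set.Ici (0 : ℝ)) := by
    refine antitoneOn_of_hasDerivWithinAt_nonpos (convex_Ici 0)
      (fun t _ => (hasDerivAt_vecMul_exp_smul_apply l A j t).continuousAt.continuousWithinAt)
      (fun t _ => (hasDerivAt_vecMul_exp_smul_apply l A j t).hasDerivWithinAt) fun t ht => ?_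
    rw [← vecMul_vecMul]
    exact Finset.sum_nonpos fun k _ =>
      mul_nonpos_of_nonpos_of_nonneg (hlA k) ((hA.smul (interior_subset ht)).exp_apply_nonneg k j)
  simpa using hanti Set.self_mem_Ici hs hs

end Matrix

theorem minimum_dwell_time_general (n : ℕ) (A J : Matrix (Fin n) (Fin n) ℝ)
    (hA : ∀ i j, i ≠ j → 0 ≤ A i j)
    (T : ℝ)
    (l : Fin n → ℝ)
    (hflow : ∀ j, Matrix.vecMul l A j < 0)
    (hjump : ∀ j, Matrix.vecMul l (J * NormedSpace.exp (T • A)) j < l j) :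
    ∀ θ : ℝ, T ≤ θ → ∀ j, Matrix.vecMul l (J * NormedSpace.exp (θ • A)) j < l j := by
  intro θ hθ j
  have hs : 0 ≤ θ - T := sub_nonneg.mpr hθ
  have hE : IsMetzler ((θ - T) • A) := IsMetzler.smul hA hs
  have hsplit : exp (θ • A) = exp (T • A) * exp ((θ - T) • A) := by
    rw [← exp_add_of_commute _ _ (((Commute.refl A).smul_left T).smul_right _), ← add_smul,
      add_sub_cancel]
  calc (l ᵥ* (J * exp (θ • A))) j
      = ((l ᵥ* (J * exp (T • A))) ᵥ* exp ((θ - T) • A)) j := by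
        rw [hsplit, ← Matrix.mul_assoc, vecMul_vecMul]
    _ < (l ᵥ* exp ((θ - T) • A)) j :=
        vecMul_apply_lt_vecMul_apply hE.exp_apply_nonneg (hE.exp_apply_self_pos j)
          (fun k => (hjump k).le) (hjump j)
    _ ≤ l j := IsMetzler.vecMul_exp_smul_apply_le hA (fun k => (hflow k).le) hs j

/-- Minimum dwell-time key implication: if `lᵀA < 0` and `lᵀ J exp(A T̄) < lᵀ` componentwise,
then `lᵀ J exp(A θ) < lᵀ` componentwise for every `θ ≥ T̄`. -/
theorem minimum_dwell_time (n : ℕ) (A J : Matrix (Fin n) (Fin n) ℝ)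
    (hA : ∀ i j, i ≠ j → 0 ≤ A i j) (hJ : ∀ i j, 0 ≤ J i j)
    (T : ℝ) (hT : 0 < T)
    (l : Fin n → ℝ) (hl : ∀ i, 0 < l i)
    (hflow : ∀ j, Matrix.vecMul l A j < 0)
    (hjump : ∀ j, Matrix.vecMul l (J * NormedSpace.exp (T • A)) j < l j) :
    ∀ θ : ℝ, T ≤ θ → ∀ j, Matrix.vecMul l (J * NormedSpace.exp (θ • A)) j < l j :=
  minimum_dwell_time_general n A J hA T l hflow hjump
end

section
/- Let A₁, …, A_N be Metzler matrices. If there exists λ ∈ ℝ^n with all entries strictly positive such that λᵀA_i < 0 componentwise for every i, then for any switching signal σ : ℝ≥0 → {1, …, N} that is piecewise constant, every solution x of ẋ = A_{σ(t)} x with x(0) ∈ ℝ^n_{≥0} satisfies that V(x(t)) = λᵀx(t) is strictly decreasing whenever x(t) ≠ 0. -/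
/-!
The negative part `f t = ∑ i, (x t i)⁻` of a trajectory satisfies `D⁺f ≤ n K f` for the upper
right Dini derivative, `K` bounding the matrix entries: a component at or below zero is driven
down only by the negative parts of the other components, since the off-diagonal coefficients are
nonnegative. As `f 0 = 0`, Grönwall's inequality keeps `f = 0` on `[0, ∞)`, so the trajectory
stays in the nonnegative orthant, where `V' = (l ᵥ* A (σ t)) ⬝ᵥ x < 0` as soon as `x ≠ 0`.
-/

open Matrix Filter Set Topology
open scoped NNReal

def Matrix.IsMetzler_s15 {m R : Type*} [Zero R] [LE R] (M : Matrix m m R) : Prop :=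
  ∀ i j, i ≠ j → 0 ≤ M i j

section OrderedRing

variable {m R : Type*} [Fintype m] [CommRing R] [LinearOrder R] [IsStrictOrderedRing R]

lemma Matrix.IsMetzler_s15.neg_mulVec_le {M : Matrix m m R} (hM : M.IsMetzler_s15) {v : m → R} {i : m}
    (hvi : v i ≤ 0) : -(M *ᵥ v) i ≤ ∑ j, |M i j| * (v j)⁻ := by
  rw [mulVec, dotProduct, ← Finset.sum_neg_distrib]
  refine Finset.sum_le_sum fun j _ => ?_
  rw [← mul_neg]
  obtain rfl | hji := eq_or_ne j i
  · rw [← negPart_eq_neg.2 hvi]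
    exact mul_le_mul_of_nonneg_right (le_abs_self _) (negPart_nonneg _)
  · rw [abs_of_nonneg (hM i j hji.symm)]
    exact mul_le_mul_of_nonneg_left (neg_le_negPart _) (hM i j hji.symm)

lemma dotProduct_mulVec_neg_of_vecMul_neg {M : Matrix m m R} {l v : m → R}
    (hl : ∀ j, (l ᵥ* M) j < 0) (hv : 0 ≤ v) (hv0 : v ≠ 0) : l ⬝ᵥ (M *ᵥ v) < 0 := by
  obtain ⟨j, hj⟩ := Function.ne_iff.1 hv0
  rw [dotProduct_mulVec, ← dotProduct_zero (l ᵥ* M)]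
  exact Finset.sum_lt_sum (fun i _ => mul_le_mul_of_nonpos_left (hv i) (hl i).le)
    ⟨j, Finset.mem_univ j, mul_lt_mul_of_neg_left ((hv j).lt_of_ne' hj) (hl j)⟩

end OrderedRing

lemma negPart_sub_negPart_le_posPart_sub (a b : ℝ) : a⁻ - b⁻ ≤ (b - a)⁺ := by
  rw [sub_le_iff_le_add, negPart_def]
  exact sup_le (by linarith [neg_le_negPart b, le_posPart (b - a)])
    (add_nonneg (posPart_nonneg _) (negPart_nonneg _))

lemma slope_negPart_le {h : ℝ → ℝ} {s z : ℝ} (hsz : s < z) :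
    slope (fun u => (h u)⁻) s z ≤ (-slope h s z)⁺ := by
  have hc : 0 ≤ (z - s)⁻¹ := inv_nonneg.2 (sub_pos.2 hsz).le
  rw [slope_def_module, slope_def_module, smul_eq_mul, smul_eq_mul, posPart_def, ← mul_neg,
    neg_sub, ← mul_zero (z - s)⁻¹, ← mul_max_of_nonneg _ _ hc]
  exact mul_le_mul_of_nonneg_left (negPart_sub_negPart_le_posPart_sub _ _) hc

lemma HasDerivAt.eventually_slope_negPart_lt {h : ℝ → ℝ} {d s B : ℝ} (hd : HasDerivAt h d s)
    (hB : 0 < B) (hdB : h s ≤ 0 → -d < B) :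
    ∀ᶠ z in 𝓝[>] s, slope (fun u => (h u)⁻) s z < B := by
  rcases lt_or_ge 0 (h s) with hpos | hnonpos
  · filter_upwards [nhdsWithin_le_nhds (hd.continuousAt.eventually (lt_mem_nhds hpos))] with z hz
    simpa [slope_def_field, negPart_eq_zero.2 hz.le, negPart_eq_zero.2 hpos.le] using hB
  · have hlim : Tendsto (fun z => (-slope h s z)⁺) (𝓝[>] s) (𝓝 (-d)⁺) :=
      (continuous_posPart.tendsto _).comp
        ((hasDerivAt_iff_tendsto_slope.1 hd).mono_left (nhdsGT_le_nhdsNE s)).neg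
    have hdB' : (-d)⁺ < B := posPart_lt.2 ⟨hdB hnonpos, hB⟩
    filter_upwards [hlim.eventually (eventually_lt_nhds hdB'), self_mem_nhdsWithin] with z hz hsz
    exact (slope_negPart_le hsz).trans_lt hz

lemma eventually_slope_sum_lt {ι : Type*} (S : Finset ι) {g : ι → ℝ → ℝ} {b : ι → ℝ} {s r : ℝ}
    (hg : ∀ i ∈ S, ∀ B > b i, ∀ᶠ z in 𝓝[>] s, slope (g i) s z < B) (hr : ∑ i ∈ S, b i < r) :
    ∀ᶠ z in 𝓝[>] s, slope (fun u => ∑ i ∈ S, g i u) s z < r := by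
  classical
  induction S using Finset.induction_on generalizing r with
  | empty => simpa [slope_def_field] using hr
  | insert i S hi ih =>
    rw [Finset.sum_insert hi] at hr
    obtain ⟨B, hbB, hBr⟩ := exists_between (lt_sub_iff_add_lt.2 hr)
    filter_upwards [hg i (Finset.mem_insert_self i S) B hbB,
      ih (fun j hj => hg j (Finset.mem_insert_of_mem hj)) (lt_sub_comm.1 hBr)] with z hgi hS
    rw [slope_def_module] at hgi hS ⊢
    simp only [Finset.sum_insert hi, smul_eq_mul] at hgi hS ⊢
    linarith

section PositiveSystem

variable {n : Type*} [Fintype n]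

lemma Matrix.IsMetzler_s15.eventually_slope_sum_negPart_lt {M : Matrix n n ℝ} (hM : M.IsMetzler_s15)
    {K : ℝ≥0} (hMK : ∀ i j, |M i j| ≤ K) {x : ℝ → n → ℝ} {s r : ℝ}
    (hx : HasDerivAt x (M *ᵥ x s) s) (hr : Fintype.card n * K * ∑ i, (x s i)⁻ < r) :
    ∀ᶠ z in 𝓝[>] s, slope (fun u => ∑ i, (x u i)⁻) s z < r := by
  have hbound : ∀ i, ∑ j, |M i j| * (x s j)⁻ ≤ K * ∑ j, (x s j)⁻ := fun i => by
    rw [Finset.mul_sum]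
    exact Finset.sum_le_sum fun j _ => mul_le_mul_of_nonneg_right (hMK i j) (negPart_nonneg _)
  refine eventually_slope_sum_lt Finset.univ (b := fun _ => K * ∑ j, (x s j)⁻)
    (fun i _ B hB => (hasDerivAt_pi.1 hx i).eventually_slope_negPart_lt ?_ fun hxi => ?_)
    (by simpa [mul_assoc] using hr)
  · exact hB.trans_le' (by positivity)
  · exact ((hM.neg_mulVec_le hxi).trans (hbound i)).trans_lt hB

theorem Matrix.IsMetzler_s15.nonneg_of_hasDerivAt_mulVec {M : ℝ → Matrix n n ℝ}
    (hM : ∀ t, (M t).IsMetzler_s15) {K : ℝ≥0} (hMK : ∀ t i j, |M t i j| ≤ K) {x : ℝ → n → ℝ}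
    (hx : ∀ t, 0 ≤ t → HasDerivAt x (M t *ᵥ x t) t) (hx0 : 0 ≤ x 0) {t : ℝ} (ht : 0 ≤ t) :
    0 ≤ x t := by
  set f : ℝ → ℝ := fun s => ∑ i, (x s i)⁻
  have hxc : ContinuousOn x (Icc 0 t) := fun s hs =>
    (hx s hs.1).continuousAt.continuousWithinAt
  have hf : ContinuousOn f (Icc 0 t) := by fun_prop
  have hf0 : f 0 ≤ 0 := by simp [f, negPart_eq_zero.2 (hx0 _)]
  have hft : f t ≤ 0 := by
    simpa [gronwallBound_ε0_δ0] using le_gronwallBound_of_liminf_deriv_right_le hf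
      (fun s hs r hr => ((hM s).eventually_slope_sum_negPart_lt (hMK s) (hx s hs.1) hr).frequently)
      hf0 (fun s _ => le_add_of_nonneg_right le_rfl) t ⟨ht, le_rfl⟩
  intro i
  refine negPart_eq_zero.1 (le_antisymm ?_ (negPart_nonneg _))
  exact (Finset.single_le_sum (fun j _ => negPart_nonneg (x t j)) (Finset.mem_univ i)).trans hft

end PositiveSystem

theorem switched_common_copositive_lyapunov_general (n N : ℕ)
    (A : Fin N → Matrix (Fin n) (Fin n) ℝ)
    (hA : ∀ k i j, i ≠ j → 0 ≤ A k i j)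
    (l : Fin n → ℝ)
    (hlyap : ∀ k j, Matrix.vecMul l (A k) j < 0)
    (σ : ℝ → Fin N)
    (x : ℝ → Fin n → ℝ)
    (hx : ∀ t : ℝ, HasDerivAt x (Matrix.mulVec (A (σ t)) (x t)) t)
    (hx0 : ∀ i, 0 ≤ x 0 i) :
    ∀ t : ℝ, 0 ≤ t → x t ≠ 0 → deriv (fun s => ∑ i, l i * x s i) t < 0 := by
  intro t ht hxt
  obtain ⟨K, hK⟩ := Finite.exists_le fun p : Fin N × Fin n × Fin n => ‖A p.1 p.2.1 p.2.2‖₊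
  have hxt_nonneg : 0 ≤ x t :=
    Matrix.IsMetzler_s15.nonneg_of_hasDerivAt_mulVec (fun s => hA (σ s))
      (fun s i j => by simpa using NNReal.coe_le_coe.2 (hK (σ s, i, j))) (fun s _ => hx s) hx0 ht
  have hV : HasDerivAt (fun s => ∑ i, l i * x s i) (l ⬝ᵥ (A (σ t) *ᵥ x t)) t :=
    HasDerivAt.fun_sum fun i _ => (hasDerivAt_pi.1 (hx t) i).const_mul (l i)
  rw [hV.deriv]
  exact dotProduct_mulVec_neg_of_vecMul_neg (hlyap (σ t)) hxt_nonneg hxt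

/-- A common linear copositive Lyapunov function strictly decreases along trajectories of a
positive switched system, for any piecewise constant switching signal. -/
theorem switched_common_copositive_lyapunov (n N : ℕ)
    (A : Fin N → Matrix (Fin n) (Fin n) ℝ)
    (hA : ∀ k i j, i ≠ j → 0 ≤ A k i j)
    (l : Fin n → ℝ) (hl : ∀ i, 0 < l i)
    (hlyap : ∀ k j, Matrix.vecMul l (A k) j < 0)
    (σ : ℝ → Fin N)
    (hσ : ∀ t : ℝ, ∃ ε > 0, ∀ s ∈ Set.Ico t (t + ε), σ s = σ t)
    (x : ℝ → Fin n → ℝ)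
    (hx : ∀ t : ℝ, HasDerivAt x (Matrix.mulVec (A (σ t)) (x t)) t)
    (hx0 : ∀ i, 0 ≤ x 0 i) :
    ∀ t : ℝ, 0 ≤ t → x t ≠ 0 → deriv (fun s => ∑ i, l i * x s i) t < 0 :=
  switched_common_copositive_lyapunov_general n N A hA l hlyap σ x hx hx0
end

section
/- Let A be an n×n Metzler matrix. Then A is Hurwitz stable if and only if there exists μ ∈ ℝ^n with all entries strictly positive such that A·μ has all entries strictly negative. -/
open Matrix NormedSpace Filter MeasureTheory Set Topology

attribute [local instance] Matrix.linftyOpNormedRing Matrix.linftyOpNormedAlgebra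

namespace MetzlerAux

variable {n : ℕ}

/-- Entry evaluation as a continuous linear map. -/
noncomputable def entryCLM (𝕜 : Type*) [RCLike 𝕜] (i j : Fin n) :
    Matrix (Fin n) (Fin n) 𝕜 →L[𝕜] 𝕜 :=
  LinearMap.toContinuousLinearMap
    { toFun := fun X => X i j
      map_add' := fun X Y => rfl
      map_smul' := fun c X => rfl }

@[simp] lemma entryCLM_apply (𝕜 : Type*) [RCLike 𝕜] (i j : Fin n)
    (X : Matrix (Fin n) (Fin n) 𝕜) : entryCLM 𝕜 i j X = X i j := rfl

/-- `X ↦ X *ᵥ w` as a continuous linear map. -/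
noncomputable def mulVecCLM (𝕜 : Type*) [RCLike 𝕜] (w : Fin n → 𝕜) :
    Matrix (Fin n) (Fin n) 𝕜 →L[𝕜] (Fin n → 𝕜) :=
  LinearMap.toContinuousLinearMap
    { toFun := fun X => X *ᵥ w
      map_add' := fun X Y => Matrix.add_mulVec X Y w
      map_smul' := fun c X => Matrix.smul_mulVec c X w }

@[simp] lemma mulVecCLM_apply (𝕜 : Type*) [RCLike 𝕜] (w : Fin n → 𝕜)
    (X : Matrix (Fin n) (Fin n) 𝕜) : mulVecCLM 𝕜 w X = X *ᵥ w := rfl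

lemma pow_entries_nonneg {B : Matrix (Fin n) (Fin n) ℝ} (hB : ∀ i j, 0 ≤ B i j) (k : ℕ) :
    ∀ i j, 0 ≤ (B ^ k) i j := by
  induction k with
  | zero => intro i j; by_cases h : i = j <;> simp [pow_zero, Matrix.one_apply, h]
  | succ k ih =>
      intro i j
      rw [pow_succ, Matrix.mul_apply]
      exact Finset.sum_nonneg fun l _ => mul_nonneg (ih i l) (hB l j)

/-- Entries of `exp` of an entrywise nonnegative matrix are nonnegative. -/
lemma exp_entries_nonneg {B : Matrix (Fin n) (Fin n) ℝ} (hB : ∀ i j, 0 ≤ B i j) (i j : Fin n) :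
    0 ≤ exp B i j := by
  have hs := expSeries_summable' (𝕂 := ℝ) B
  have : exp B i j = ∑' k : ℕ, ((k.factorial)⁻¹ : ℝ) • (B ^ k) i j := by
    have := (entryCLM ℝ i j).map_tsum hs
    rw [exp_eq_tsum (𝕂 := ℝ)]
    simpa using this
  rw [this]
  exact tsum_nonneg fun k => smul_nonneg (by positivity) (pow_entries_nonneg hB k i j)

/-- For a Metzler matrix `A` and `t ≥ 0`, the entries of `exp (t • A)` are nonnegative. -/
lemma exp_metzler_nonneg {A : Matrix (Fin n) (Fin n) ℝ}
    (hA : ∀ i j, i ≠ j → 0 ≤ A i j) {t : ℝ} (ht : 0 ≤ t) (i j : Fin n) :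
    0 ≤ exp (t • A) i j := by
  set c : ℝ := ∑ l, |A l l| with hc
  have hc0 : ∀ l, -A l l ≤ c := by
    intro l
    calc -A l l ≤ |A l l| := neg_le_abs _
    _ ≤ c := Finset.single_le_sum (f := fun l => |A l l|) (fun _ _ => abs_nonneg _)
        (Finset.mem_univ l)
  set B : Matrix (Fin n) (Fin n) ℝ := A + c • (1 : Matrix (Fin n) (Fin n) ℝ) with hBdef
  have hB : ∀ i j, 0 ≤ B i j := by
    intro i j
    by_cases h : i = j
    · subst h
      simp only [hBdef, Matrix.add_apply, Matrix.smul_apply, Matrix.one_apply_eq, smul_eq_mul,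
        mul_one]
      linarith [hc0 i]
    · simpa [hBdef, Matrix.one_apply_ne h] using hA i j h
  have hsplit : t • A = t • B + (-(t * c)) • (1 : Matrix (Fin n) (Fin n) ℝ) := by
    rw [hBdef]; rw [smul_add, smul_smul, neg_smul, add_neg_cancel_right]
  have hcomm : Commute (t • B) ((-(t * c)) • (1 : Matrix (Fin n) (Fin n) ℝ)) :=
    ((Commute.one_right (t • B)).smul_right _)
  have hexp1 : exp ((-(t * c)) • (1 : Matrix (Fin n) (Fin n) ℝ))
      = Real.exp (-(t * c)) • (1 : Matrix (Fin n) (Fin n) ℝ) := by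
    erw [← Algebra.algebraMap_eq_smul_one, ← algebraMap_exp_comm, ← Real.exp_eq_exp_ℝ,
      Algebra.algebraMap_eq_smul_one]
  have : exp (t • A) = Real.exp (-(t * c)) • exp (t • B) := by
    erw [hsplit, exp_add_of_commute hcomm, hexp1, Algebra.mul_smul_comm, mul_one, mul_comm]
    rfl
  rw [this]
  have : (Real.exp (-(t * c)) • exp (t • B)) i j = Real.exp (-(t * c)) * exp (t • B) i j :=
    rfl
  rw [this]
  refine mul_nonneg (Real.exp_nonneg _) ?_
  refine exp_entries_nonneg (fun i j => ?_) i j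
  exact smul_nonneg ht (hB i j)

/-- Basic decay estimate for `t^j * exp (t * r)` with `r < 0`. -/
lemma poly_exp_bound {r : ℝ} (hr : r < 0) (j : ℕ) :
    ∃ C : ℝ, 0 ≤ C ∧ ∀ t : ℝ, 0 ≤ t → t ^ j * Real.exp (t * r) ≤ C * Real.exp (-(-r / 2) * t) := by
  set ε : ℝ := -r with hε
  have hε0 : 0 < ε := by simp [hε]; linarith
  refine ⟨(j.factorial : ℝ) * (2 / ε) ^ j, by positivity, fun t ht => ?_⟩
  have key : t ^ j ≤ (j.factorial : ℝ) * (2 / ε) ^ j * Real.exp (ε / 2 * t) := by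
    have h1 : (ε / 2 * t) ^ j / (j.factorial : ℝ) ≤ Real.exp (ε / 2 * t) :=
      Real.pow_div_factorial_le_exp _ (by positivity) j
    have h2 : (ε / 2 * t) ^ j = (ε / 2) ^ j * t ^ j := by ring
    have h3 : (0:ℝ) < (j.factorial : ℝ) := by positivity
    rw [div_le_iff₀ h3] at h1
    rw [h2] at h1
    have h4 : t ^ j = (2 / ε) ^ j * ((ε / 2) ^ j * t ^ j) := by
      rw [← mul_assoc, ← mul_pow]
      field_simp
      rw [one_pow, mul_one]
    rw [h4]
    calc (2 / ε) ^ j * ((ε / 2) ^ j * t ^ j)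
        ≤ (2 / ε) ^ j * (Real.exp (ε / 2 * t) * (j.factorial : ℝ)) := by
          exact mul_le_mul_of_nonneg_left h1 (by positivity)
      _ = (j.factorial : ℝ) * (2 / ε) ^ j * Real.exp (ε / 2 * t) := by ring
  have hrε : t * r = -(ε * t) := by rw [hε]; ring
  calc t ^ j * Real.exp (t * r)
      ≤ ((j.factorial : ℝ) * (2 / ε) ^ j * Real.exp (ε / 2 * t)) * Real.exp (t * r) := by
        exact mul_le_mul_of_nonneg_right key (Real.exp_nonneg _)
    _ = (j.factorial : ℝ) * (2 / ε) ^ j * Real.exp (-(ε / 2) * t) := by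
        rw [mul_assoc, ← Real.exp_add, hrε]; ring_nf
    _ = (j.factorial : ℝ) * (2 / ε) ^ j * Real.exp (-(-r / 2) * t) := by rw [hε]

end MetzlerAux

namespace MetzlerAux

variable {n : ℕ}

lemma term_decay {z : ℂ} (hz : z.re < 0) (j : ℕ) (a : ℂ) :
    IntegrableOn (fun t : ℝ => Complex.exp ((t : ℂ) * z) * ((t : ℂ) ^ j * a)) (Ioi 0) volume ∧
      Tendsto (fun t : ℝ => Complex.exp ((t : ℂ) * z) * ((t : ℂ) ^ j * a)) atTop (𝓝 0) := by
  obtain ⟨C, hC0, hC⟩ := poly_exp_bound hz j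
  set ε : ℝ := -z.re / 2 with hεdef
  have hε : 0 < ε := by rw [hεdef]; linarith
  have hcont : Continuous fun t : ℝ => Complex.exp ((t : ℂ) * z) * ((t : ℂ) ^ j * a) := by
    fun_prop
  have hnorm : ∀ t : ℝ, 0 ≤ t →
      ‖Complex.exp ((t : ℂ) * z) * ((t : ℂ) ^ j * a)‖ ≤ C * ‖a‖ * Real.exp (-ε * t) := by
    intro t ht
    have h1 : ‖Complex.exp ((t : ℂ) * z)‖ = Real.exp (t * z.re) := by
      rw [Complex.norm_exp]
      congr 1
      simp [Complex.mul_re]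
    have h2 : ‖(t : ℂ) ^ j‖ = t ^ j := by
      rw [norm_pow, Complex.norm_real, Real.norm_eq_abs, abs_of_nonneg ht]
    calc ‖Complex.exp ((t : ℂ) * z) * ((t : ℂ) ^ j * a)‖
        = Real.exp (t * z.re) * (t ^ j * ‖a‖) := by rw [norm_mul, norm_mul, h1, h2]
      _ = (t ^ j * Real.exp (t * z.re)) * ‖a‖ := by ring
      _ ≤ (C * Real.exp (-ε * t)) * ‖a‖ := by
          refine mul_le_mul_of_nonneg_right ?_ (norm_nonneg _)
          simpa [hεdef] using hC t ht
      _ = C * ‖a‖ * Real.exp (-ε * t) := by ring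
  constructor
  · refine Integrable.mono' ((exp_neg_integrableOn_Ioi 0 hε).const_mul (C * ‖a‖))
      hcont.aestronglyMeasurable ?_
    refine (ae_restrict_iff' measurableSet_Ioi).2 (Filter.Eventually.of_forall fun t ht => ?_)
    exact hnorm t (le_of_lt ht)
  · refine squeeze_zero_norm' (a := fun t => C * ‖a‖ * Real.exp (-ε * t)) ?_ ?_
    · filter_upwards [eventually_ge_atTop (0 : ℝ)] with t ht
      exact hnorm t ht
    · have h1 : Tendsto (fun t : ℝ => ε * t) atTop atTop :=
        Tendsto.const_mul_atTop hε tendsto_id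
      have h2 : Tendsto (fun t : ℝ => Real.exp (-(ε * t))) atTop (𝓝 0) :=
        Real.tendsto_exp_neg_atTop_nhds_zero.comp h1
      have h3 : Tendsto (fun t : ℝ => C * ‖a‖ * Real.exp (-(ε * t))) atTop (𝓝 (C * ‖a‖ * 0)) :=
        h2.const_mul _
      rw [mul_zero] at h3
      refine h3.congr fun t => by rw [neg_mul]

end MetzlerAux
namespace MetzlerAux

variable {n : ℕ}

lemma exp_smul_decomp (M : Matrix (Fin n) (Fin n) ℂ) (z : ℂ) (w : Fin n → ℂ) (k : ℕ)
    (hw : ((Matrix.toLinAlgEquiv' M - z • 1) ^ k) w = 0) (t : ℝ) :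
    exp (t • M) *ᵥ w = Complex.exp ((t : ℂ) * z) •
      ∑ j ∈ Finset.range k,
        ((t : ℂ) ^ j * ((j.factorial : ℂ))⁻¹) • ((M - z • 1) ^ j *ᵥ w) := by
  set N : Matrix (Fin n) (Fin n) ℂ := M - z • 1 with hN
  have hNk : N ^ k *ᵥ w = 0 := by
    have : Matrix.toLinAlgEquiv' (N ^ k) w = 0 := by
      rw [map_pow, hN, map_sub, _root_.map_smul, _root_.map_one]
      exact hw
    rwa [Matrix.toLinAlgEquiv'_apply] at this
  have hNj : ∀ j, k ≤ j → N ^ j *ᵥ w = 0 := by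
    intro j hj
    have : N ^ j = N ^ (j - k) * N ^ k := by rw [← pow_add]; congr 1; omega
    rw [this, ← Matrix.mulVec_mulVec, hNk, Matrix.mulVec_zero]
  have hts : t • M = ((t : ℂ) * z) • (1 : Matrix (Fin n) (Fin n) ℂ) + (t : ℂ) • N := by
    rw [hN, smul_sub, smul_smul, ← algebraMap_smul ℂ t M, Complex.coe_algebraMap]
    abel
  have hcomm : Commute (((t : ℂ) * z) • (1 : Matrix (Fin n) (Fin n) ℂ)) ((t : ℂ) • N) :=
    (Commute.one_left _).smul_left _
  have hexp1 : exp (((t : ℂ) * z) • (1 : Matrix (Fin n) (Fin n) ℂ))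
      = Complex.exp ((t : ℂ) * z) • (1 : Matrix (Fin n) (Fin n) ℂ) := by
    erw [← Algebra.algebraMap_eq_smul_one, ← algebraMap_exp_comm, ← Complex.exp_eq_exp_ℂ,
      Algebra.algebraMap_eq_smul_one]
  have hsplit : exp (t • M) = Complex.exp ((t : ℂ) * z) • exp ((t : ℂ) • N) := by
    erw [hts, exp_add_of_commute hcomm, hexp1, smul_mul_assoc, one_mul]
    rfl
  rw [hsplit, Matrix.smul_mulVec]
  congr 1
  have hsum : exp ((t : ℂ) • N) *ᵥ w
      = ∑' j : ℕ, ((j.factorial : ℂ))⁻¹ • (((t : ℂ) • N) ^ j *ᵥ w) := by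
    have hs := expSeries_summable' (𝕂 := ℂ) ((t : ℂ) • N)
    have := (mulVecCLM ℂ w).map_tsum hs
    rw [exp_eq_tsum (𝕂 := ℂ)]
    simpa using this
  rw [hsum]
  have hterm : ∀ j : ℕ, ((j.factorial : ℂ))⁻¹ • (((t : ℂ) • N) ^ j *ᵥ w)
      = ((t : ℂ) ^ j * ((j.factorial : ℂ))⁻¹) • (N ^ j *ᵥ w) := by
    intro j
    rw [smul_pow, Matrix.smul_mulVec, smul_smul, mul_comm]
  calc (∑' j : ℕ, ((j.factorial : ℂ))⁻¹ • (((t : ℂ) • N) ^ j *ᵥ w))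
      = ∑' j : ℕ, ((t : ℂ) ^ j * ((j.factorial : ℂ))⁻¹) • (N ^ j *ᵥ w) := by
        exact tsum_congr hterm
    _ = ∑ j ∈ Finset.range k, ((t : ℂ) ^ j * ((j.factorial : ℂ))⁻¹) • (N ^ j *ᵥ w) := by
        refine tsum_eq_sum fun j hj => ?_
        rw [hNj j (by simpa using hj), smul_zero]

end MetzlerAux
namespace MetzlerAux

variable {n : ℕ}

lemma decay (M : Matrix (Fin n) (Fin n) ℂ) (hM : ∀ z ∈ spectrum ℂ M, z.re < 0)
    (w : Fin n → ℂ) (i : Fin n) :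
    IntegrableOn (fun t : ℝ => (exp (t • M) *ᵥ w) i) (Ioi 0) volume ∧
      Tendsto (fun t : ℝ => (exp (t • M) *ᵥ w) i) atTop (𝓝 0) := by
  set f : Module.End ℂ (Fin n → ℂ) := Matrix.toLinAlgEquiv' M with hf
  suffices h : ∀ w : Fin n → ℂ, ∀ i : Fin n,
      IntegrableOn (fun t : ℝ => (exp (t • M) *ᵥ w) i) (Ioi 0) volume ∧
        Tendsto (fun t : ℝ => (exp (t • M) *ᵥ w) i) atTop (𝓝 0) from h w i
  intro w
  have hmem : w ∈ ⨆ z : ℂ, f.maxGenEigenspace z := by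
    rw [Module.End.iSup_maxGenEigenspace_eq_top]; trivial
  refine Submodule.iSup_induction (motive := fun w => ∀ i : Fin n,
      IntegrableOn (fun t : ℝ => (exp (t • M) *ᵥ w) i) (Ioi 0) volume ∧
        Tendsto (fun t : ℝ => (exp (t • M) *ᵥ w) i) atTop (𝓝 0))
    (fun z : ℂ => f.maxGenEigenspace z) hmem ?_ ?_ ?_
  · -- generalized eigenvector case
    intro z w hw i
    rcases eq_or_ne w 0 with rfl | hw0
    · simp only [Matrix.mulVec_zero, Pi.zero_apply]
      exact ⟨integrableOn_zero, tendsto_const_nhds⟩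
    obtain ⟨k, hk⟩ := (Module.End.mem_maxGenEigenspace f z w).1 hw
    have hzre : z.re < 0 := by
      have h1 : f.HasEigenvalue z := by
        refine Module.End.hasEigenvalue_of_hasGenEigenvalue (k := k) ?_
        rw [Module.End.HasGenEigenvalue, Module.End.HasUnifEigenvalue, Submodule.ne_bot_iff]
        refine ⟨w, ?_, hw0⟩
        rw [Module.End.mem_genEigenspace]
        exact ⟨k, le_refl _, hk⟩
      have h2 : z ∈ spectrum ℂ f := Module.End.hasEigenvalue_iff_mem_spectrum.1 h1
      rw [hf, AlgEquiv.spectrum_eq] at h2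
      exact hM z h2
    set N : Matrix (Fin n) (Fin n) ℂ := M - z • 1 with hN
    set a : ℕ → ℂ := fun j => ((j.factorial : ℂ))⁻¹ * ((N ^ j *ᵥ w) i) with ha
    have hfun : (fun t : ℝ => (exp (t • M) *ᵥ w) i)
        = fun t : ℝ => ∑ j ∈ Finset.range k,
            Complex.exp ((t : ℂ) * z) * ((t : ℂ) ^ j * a j) := by
      funext t
      rw [exp_smul_decomp M z w k hk t]
      rw [Pi.smul_apply, Finset.sum_apply, smul_eq_mul, Finset.mul_sum]
      refine Finset.sum_congr rfl fun j _ => ?_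
      rw [Pi.smul_apply, smul_eq_mul, ha]
      ring
    rw [hfun]
    constructor
    · exact integrable_finset_sum _ fun j _ => (term_decay hzre j (a j)).1
    · have := tendsto_finset_sum (Finset.range k)
        (fun j _ => (term_decay hzre j (a j)).2)
      simpa using this
  · -- zero
    intro i
    simp only [Matrix.mulVec_zero, Pi.zero_apply]
    exact ⟨integrableOn_zero, tendsto_const_nhds⟩
  · -- additivity
    intro x y hx hy i
    have hfun : (fun t : ℝ => (exp (t • M) *ᵥ (x + y)) i)
        = fun t : ℝ => (exp (t • M) *ᵥ x) i + (exp (t • M) *ᵥ y) i := by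
      funext t
      rw [Matrix.mulVec_add, Pi.add_apply]
    rw [hfun]
    refine ⟨((hx i).1).add ((hy i).1), ?_⟩
    have := ((hx i).2).add ((hy i).2)
    simpa using this

end MetzlerAux
namespace MetzlerAux

variable {n : ℕ}

lemma exp_map_ofReal (A : Matrix (Fin n) (Fin n) ℝ) (t : ℝ) :
    exp (t • A.map (algebraMap ℝ ℂ)) = (exp (t • A)).map (algebraMap ℝ ℂ) := by
  have hc : Continuous ((algebraMap ℝ ℂ).mapMatrix :
      Matrix (Fin n) (Fin n) ℝ →+* Matrix (Fin n) (Fin n) ℂ) := by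
    show Continuous fun X : Matrix (Fin n) (Fin n) ℝ => X.map (algebraMap ℝ ℂ)
    exact continuous_id.matrix_map Complex.continuous_ofReal
  have h1 := map_exp ((algebraMap ℝ ℂ).mapMatrix :
      Matrix (Fin n) (Fin n) ℝ →+* Matrix (Fin n) (Fin n) ℂ) hc (t • A)
  rw [RingHom.mapMatrix_apply] at h1
  have h2 : ((algebraMap ℝ ℂ).mapMatrix (t • A) : Matrix (Fin n) (Fin n) ℂ)
      = t • A.map (algebraMap ℝ ℂ) := by
    ext i j
    simp only [RingHom.mapMatrix_apply, Matrix.map_apply, Matrix.smul_apply, smul_eq_mul]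
    rw [Complex.real_smul]
    show (algebraMap ℝ ℂ) (t * A i j) = (t : ℂ) * (algebraMap ℝ ℂ) (A i j)
    rw [Complex.coe_algebraMap]
    push_cast
    ring
  rw [h2] at h1
  exact h1.symm

lemma exp_mulVec_ofReal (A : Matrix (Fin n) (Fin n) ℝ) (t : ℝ) (i : Fin n) :
    (exp (t • A.map (algebraMap ℝ ℂ)) *ᵥ fun _ => (1 : ℂ)) i
      = (((exp (t • A) *ᵥ fun _ => (1 : ℝ)) i : ℝ) : ℂ) := by
  rw [exp_map_ofReal]
  simp only [Matrix.mulVec, dotProduct, Matrix.map_apply, mul_one]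
  push_cast
  rfl

end MetzlerAux

open MetzlerAux in
/-- A Metzler matrix is Hurwitz stable iff `Aμ < 0` componentwise for some strictly
positive vector `μ`. -/
theorem metzler_hurwitz_iff (n : ℕ) (A : Matrix (Fin n) (Fin n) ℝ)
    (hA : ∀ i j, i ≠ j → 0 ≤ A i j) :
    (∀ μ ∈ spectrum ℂ (A.map (algebraMap ℝ ℂ)), μ.re < 0) ↔
      ∃ μ : Fin n → ℝ, (∀ i, 0 < μ i) ∧ ∀ i, Matrix.mulVec A μ i < 0 := by
  constructor
  · -- hard direction
    intro hH
    set M : Matrix (Fin n) (Fin n) ℂ := A.map (algebraMap ℝ ℂ) with hM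
    set one' : Fin n → ℝ := fun _ => 1 with hone'
    set g : ℝ → Fin n → ℝ := fun t => exp (t • A) *ᵥ one' with hg
    have hbridge : ∀ (t : ℝ) (i : Fin n),
        (exp (t • M) *ᵥ fun _ => (1 : ℂ)) i = ((g t i : ℝ) : ℂ) := by
      intro t i
      exact exp_mulVec_ofReal A t i
    have hint : ∀ i, IntegrableOn (fun t => g t i) (Ioi 0) volume := by
      intro i
      have h1 := (decay M hH (fun _ => (1 : ℂ)) i).1
      have h2 : (fun t : ℝ => g t i)
          = fun t : ℝ => ((exp (t • M) *ᵥ fun _ => (1 : ℂ)) i).re := by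
        funext t; rw [hbridge t i, Complex.ofReal_re]
      rw [h2]
      exact h1.re
    have htend : ∀ i, Tendsto (fun t => g t i) atTop (𝓝 0) := by
      intro i
      have h1 := (decay M hH (fun _ => (1 : ℂ)) i).2
      have h2 := (Complex.continuous_re.tendsto 0).comp h1
      have h3 : (fun t : ℝ => g t i)
          = fun t : ℝ => ((exp (t • M) *ᵥ fun _ => (1 : ℂ)) i).re := by
        funext t; rw [hbridge t i, Complex.ofReal_re]
      rw [h3]
      simpa [Function.comp_def] using h2
    have hpos : ∀ t : ℝ, 0 ≤ t → ∀ i, 0 ≤ g t i := by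
      intro t ht i
      have : g t i = ∑ j, exp (t • A) i j := by
        simp [hg, Matrix.mulVec, dotProduct, hone']
      rw [this]
      exact Finset.sum_nonneg fun j _ => exp_metzler_nonneg hA ht i j
    have hderiv : ∀ (i : Fin n) (t : ℝ), HasDerivAt (fun u => g u i) ((A *ᵥ g t) i) t := by
      intro i t
      have h := hasDerivAt_exp_smul_const (𝕂 := ℝ) A t
      set L : Matrix (Fin n) (Fin n) ℝ →L[ℝ] ℝ :=
        (ContinuousLinearMap.proj i).comp (mulVecCLM ℝ one') with hL
      have h2 := L.hasFDerivAt.comp_hasDerivAt t h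
      have hLval : L (exp (t • A) * A) = (A *ᵥ g t) i := by
        have hcomm : Commute A (exp (t • A)) :=
          (((Commute.refl A).smul_right t)).exp_right
        show ((exp (t • A) * A) *ᵥ one') i = (A *ᵥ g t) i
        rw [← hcomm.eq, ← Matrix.mulVec_mulVec]
      erw [hLval] at h2
      exact h2
    have hAg : ∀ (i : Fin n), (fun t => (A *ᵥ g t) i) = fun t => ∑ j, A i j * g t j := by
      intro i; funext t; simp [Matrix.mulVec, dotProduct]
    have hAg_int : ∀ i, IntegrableOn (fun t => (A *ᵥ g t) i) (Ioi 0) volume := by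
      intro i
      rw [hAg i]
      exact integrable_finset_sum _ fun j _ => (hint j).const_mul (A i j)
    set μ0 : Fin n → ℝ := fun i => ∫ t in Ioi 0, g t i with hμ0
    have hμ0nonneg : ∀ i, 0 ≤ μ0 i := fun i =>
      setIntegral_nonneg measurableSet_Ioi fun t ht => hpos t (le_of_lt ht) i
    have hg0 : ∀ i, g 0 i = 1 := by
      intro i
      simp [hg, zero_smul, exp_zero, Matrix.one_mulVec, hone']
    have hFTC : ∀ i, (∫ t in Ioi 0, (A *ᵥ g t) i) = -1 := by
      intro i
      have := integral_Ioi_of_hasDerivAt_of_tendsto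
        (f := fun u => g u i) (f' := fun t => (A *ᵥ g t) i) (a := 0)
        (hderiv i 0).continuousAt.continuousWithinAt
        (fun x _ => hderiv i x) (hAg_int i) (htend i)
      rw [this]
      show 0 - g 0 i = -1
      rw [hg0 i]
      ring
    have hAμ0 : ∀ i, (A *ᵥ μ0) i = -1 := by
      intro i
      have h1 : (A *ᵥ μ0) i = ∑ j, A i j * μ0 j := by simp [Matrix.mulVec, dotProduct]
      have h2 : ∀ j : Fin n, A i j * μ0 j = ∫ t in Ioi 0, A i j * g t j := by
        intro j
        rw [hμ0]
        exact (integral_const_mul _ _).symm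
      rw [h1]
      calc ∑ j, A i j * μ0 j = ∑ j, ∫ t in Ioi 0, A i j * g t j :=
            Finset.sum_congr rfl fun j _ => h2 j
        _ = ∫ t in Ioi 0, ∑ j, A i j * g t j :=
            (integral_finset_sum _ fun j _ => (hint j).const_mul (A i j)).symm
        _ = ∫ t in Ioi 0, (A *ᵥ g t) i := by rw [← hAg i]
        _ = -1 := hFTC i
    set u : Fin n → ℝ := A *ᵥ one' with hu
    set Cu : ℝ := ∑ j, |u j| with hCu
    have hCu0 : 0 ≤ Cu := Finset.sum_nonneg fun j _ => abs_nonneg _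
    set ε : ℝ := 1 / (2 * (Cu + 1)) with hε
    have hεpos : 0 < ε := by rw [hε]; positivity
    have habs : ∀ i, |u i| ≤ Cu :=
      fun i => Finset.single_le_sum (f := fun j => |u j|) (fun _ _ => abs_nonneg _)
        (Finset.mem_univ i)
    refine ⟨fun i => μ0 i + ε, fun i => by show 0 < μ0 i + ε; have h := hμ0nonneg i; linarith, fun i => ?_⟩
    have hdecomp : (fun i => μ0 i + ε) = μ0 + ε • one' := by
      funext i; simp [hone', Pi.add_apply, mul_one]
    rw [hdecomp, Matrix.mulVec_add, Matrix.mulVec_smul]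
    have : (A *ᵥ μ0 + ε • (A *ᵥ one')) i = -1 + ε * u i := by
      simp [Pi.add_apply, hAμ0 i, hu]
    rw [this]
    have h1 : ε * u i ≤ ε * |u i| := by
      exact mul_le_mul_of_nonneg_left (le_abs_self _) (le_of_lt hεpos)
    have h2 : ε * |u i| ≤ ε * Cu := mul_le_mul_of_nonneg_left (habs i) (le_of_lt hεpos)
    have h3 : ε * Cu < 1 := by
      rw [hε]
      rw [div_mul_eq_mul_div, one_mul, div_lt_one (by positivity)]
      linarith
    linarith
  · -- easy direction
    rintro ⟨μ, hμpos, hμ⟩ z hz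
    set M : Matrix (Fin n) (Fin n) ℂ := A.map (algebraMap ℝ ℂ) with hM
    rw [← AlgEquiv.spectrum_eq (Matrix.toLinAlgEquiv' (R := ℂ) (n := Fin n))] at hz
    have hev : Module.End.HasEigenvalue (Matrix.toLinAlgEquiv' M) z :=
      Module.End.HasEigenvalue.of_mem_spectrum hz
    obtain ⟨v, hv⟩ := hev.exists_hasEigenvector
    have hv0 : v ≠ 0 := hv.right
    have hMv : M *ᵥ v = z • v := by
      have := hv.apply_eq_smul
      rwa [Matrix.toLinAlgEquiv'_apply] at this
    obtain ⟨j0, hj0⟩ := Function.ne_iff.1 hv0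
    obtain ⟨i0, -, hmax⟩ := Finset.exists_max_image Finset.univ
      (fun i => ‖v i‖ / μ i) ⟨j0, Finset.mem_univ j0⟩
    set ρ : ℝ := ‖v i0‖ / μ i0 with hρ
    have hρpos : 0 < ρ := by
      refine lt_of_lt_of_le ?_ (hmax j0 (Finset.mem_univ j0))
      exact div_pos (norm_pos_iff.2 hj0) (hμpos j0)
    have hvi0 : 0 < ‖v i0‖ := by
      rcases lt_or_ge 0 ‖v i0‖ with h | h
      · exact h
      · exfalso
        have : ‖v i0‖ = 0 := le_antisymm h (norm_nonneg _)
        rw [hρ, this, zero_div] at hρpos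
        exact lt_irrefl 0 hρpos
    have hle : ∀ j, ‖v j‖ ≤ ρ * μ j := by
      intro j
      have := hmax j (Finset.mem_univ j)
      rwa [div_le_iff₀ (hμpos j), mul_comm (‖v i0‖ / μ i0) (μ j), ← hρ, mul_comm (μ j)] at this
    set a : ℝ := A i0 i0 with haa
    have heq : (z - (a : ℂ)) * v i0 = ∑ j ∈ Finset.univ.erase i0, M i0 j * v j := by
      have h1 : z * v i0 = ∑ j, M i0 j * v j := by
        have := congrFun hMv i0
        simpa [Matrix.mulVec, dotProduct] using this.symm
      have h2 : M i0 i0 * v i0 + ∑ j ∈ Finset.univ.erase i0, M i0 j * v j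
          = ∑ j, M i0 j * v j :=
        Finset.add_sum_erase Finset.univ (fun j => M i0 j * v j) (Finset.mem_univ i0)
      have h3 : (M i0 i0 : ℂ) = (a : ℂ) := by
        simp [hM, Matrix.map_apply, haa, Complex.coe_algebraMap]
      rw [sub_mul, h1, ← h2, h3]
      ring
    have hnorm : ‖z - (a : ℂ)‖ * ‖v i0‖ ≤ ρ * ∑ j ∈ Finset.univ.erase i0, A i0 j * μ j := by
      calc ‖z - (a : ℂ)‖ * ‖v i0‖ = ‖(z - (a : ℂ)) * v i0‖ := (norm_mul _ _).symm
        _ = ‖∑ j ∈ Finset.univ.erase i0, M i0 j * v j‖ := by rw [heq]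
        _ ≤ ∑ j ∈ Finset.univ.erase i0, ‖M i0 j * v j‖ := norm_sum_le _ _
        _ = ∑ j ∈ Finset.univ.erase i0, A i0 j * ‖v j‖ := by
            refine Finset.sum_congr rfl fun j hj => ?_
            have hji : j ≠ i0 := (Finset.mem_erase.1 hj).1
            have h4 : (M i0 j : ℂ) = ((A i0 j : ℝ) : ℂ) := by
              simp [hM, Matrix.map_apply, Complex.coe_algebraMap]
            rw [norm_mul, h4, Complex.norm_real, Real.norm_eq_abs,
              abs_of_nonneg (hA i0 j (Ne.symm hji))]
        _ ≤ ∑ j ∈ Finset.univ.erase i0, A i0 j * (ρ * μ j) := by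
            refine Finset.sum_le_sum fun j hj => ?_
            have hji : j ≠ i0 := (Finset.mem_erase.1 hj).1
            exact mul_le_mul_of_nonneg_left (hle j) (hA i0 j (Ne.symm hji))
        _ = ρ * ∑ j ∈ Finset.univ.erase i0, A i0 j * μ j := by
            rw [Finset.mul_sum]
            exact Finset.sum_congr rfl fun j _ => by ring
    have hsum : ∑ j ∈ Finset.univ.erase i0, A i0 j * μ j = (A *ᵥ μ) i0 - a * μ i0 := by
      have h2 : A i0 i0 * μ i0 + ∑ j ∈ Finset.univ.erase i0, A i0 j * μ j
          = ∑ j, A i0 j * μ j :=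
        Finset.add_sum_erase Finset.univ (fun j => A i0 j * μ j) (Finset.mem_univ i0)
      have h3 : (A *ᵥ μ) i0 = ∑ j, A i0 j * μ j := by simp [Matrix.mulVec, dotProduct]
      rw [h3, ← h2, haa]
      ring
    have hstrict : ρ * ∑ j ∈ Finset.univ.erase i0, A i0 j * μ j < (-a) * ‖v i0‖ := by
      have h1 : ∑ j ∈ Finset.univ.erase i0, A i0 j * μ j < -a * μ i0 := by
        rw [hsum]
        have := hμ i0
        nlinarith
      have h2 := mul_lt_mul_of_pos_left h1 hρpos
      calc ρ * ∑ j ∈ Finset.univ.erase i0, A i0 j * μ j < ρ * (-a * μ i0) := h2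
        _ = (-a) * (ρ * μ i0) := by ring
        _ = (-a) * ‖v i0‖ := by
            rw [hρ, div_mul_cancel₀ _ (ne_of_gt (hμpos i0))]
    have hfin : ‖z - (a : ℂ)‖ < -a := by
      have := lt_of_le_of_lt hnorm hstrict
      exact lt_of_mul_lt_mul_right this hvi0.le
    have hre : (z - (a : ℂ)).re ≤ ‖z - (a : ℂ)‖ := by
      exact Complex.re_le_norm _
    have : (z - (a : ℂ)).re = z.re - a := by simp
    linarith
end
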